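/- arXiv:1508.07240 — 2 statements merged into one kernel-verified Lean document; each statement's English description precedes it below -/
import Mathlib

section
/- The function y(x) = −2·ln(1 + x²) solves y''(x) + (2/x)·y'(x) + 4(2e^{y(x)} + e^{y(x)/2}) = 0 for all x > 0, and satisfies y(0) = 0 and y'(0) = 0. -/
/-!
With `u = 1 + x²` and `y = -2 log u` one has `e^y = u⁻²`, `e^{y/2} = u⁻¹`, `y' = -4x/u` and
`y'' = -4(1 - x²)/u²`, so `y'' + 2y'/x = -4(3 + x²)/u² = -4(2 + u)/u² = -4(2e^y + e^{y/2})`.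
-/

open Real

lemma hasDerivAt_one_add_sq (x : ℝ) : HasDerivAt (fun t : ℝ => 1 + t ^ 2) (2 * x) x := by
  simpa using (hasDerivAt_pow 2 x).const_add 1

lemma hasDerivAt_const_mul_log_one_add_sq (c x : ℝ) :
    HasDerivAt (fun t : ℝ => c * log (1 + t ^ 2)) (2 * c * x / (1 + x ^ 2)) x :=
  (((hasDerivAt_one_add_sq x).log (by positivity)).const_mul c).congr_deriv (by ring)

lemma deriv_const_mul_log_one_add_sq (c : ℝ) :
    deriv (fun t : ℝ => c * log (1 + t ^ 2)) = fun x => 2 * c * x / (1 + x ^ 2) :=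
  funext fun x => (hasDerivAt_const_mul_log_one_add_sq c x).deriv

lemma hasDerivAt_const_mul_div_one_add_sq (c x : ℝ) :
    HasDerivAt (fun t : ℝ => c * t / (1 + t ^ 2)) (c * (1 - x ^ 2) / (1 + x ^ 2) ^ 2) x := by
  refine (((hasDerivAt_id x).const_mul c).div (hasDerivAt_one_add_sq x)
    (by positivity)).congr_deriv ?_
  simp only [id]
  ring

lemma deriv_deriv_const_mul_log_one_add_sq (c x : ℝ) :
    deriv (deriv (fun t : ℝ => c * log (1 + t ^ 2))) x = 2 * c * (1 - x ^ 2) / (1 + x ^ 2) ^ 2 := by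
  rw [deriv_const_mul_log_one_add_sq]
  exact (hasDerivAt_const_mul_div_one_add_sq (2 * c) x).deriv

lemma exp_neg_two_mul_log {a : ℝ} (ha : 0 < a) : exp (-2 * log a) = (a ^ 2)⁻¹ := by
  rw [show -2 * log a = log (a ^ 2)⁻¹ by rw [log_inv, log_pow]; push_cast; ring,
    exp_log (by positivity)]

lemma exp_neg_two_mul_log_div_two {a : ℝ} (ha : 0 < a) : exp (-2 * log a / 2) = a⁻¹ := by
  rw [show -2 * log a / 2 = log a⁻¹ by rw [log_inv]; ring, exp_log (inv_pos.mpr ha)]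

theorem laneEmden_example5 :
    (∀ x : ℝ, 0 < x →
      deriv (deriv (fun t : ℝ => -2 * Real.log (1 + t ^ 2))) x
        + (2 / x) * deriv (fun t : ℝ => -2 * Real.log (1 + t ^ 2)) x
        + 4 * (2 * Real.exp (-2 * Real.log (1 + x ^ 2))
          + Real.exp ((-2 * Real.log (1 + x ^ 2)) / 2)) = 0) ∧
    (fun t : ℝ => -2 * Real.log (1 + t ^ 2)) 0 = 0 ∧
    deriv (fun t : ℝ => -2 * Real.log (1 + t ^ 2)) 0 = 0 := by
  refine ⟨fun x _ => ?_, by simp, by rw [deriv_const_mul_log_one_add_sq]; simp⟩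
  have hu : 0 < 1 + x ^ 2 := by positivity
  rw [deriv_deriv_const_mul_log_one_add_sq, deriv_const_mul_log_one_add_sq,
    exp_neg_two_mul_log hu, exp_neg_two_mul_log_div_two hu]
  field_simp
  ring
end

section
/- Suppose y is twice continuously differentiable on [0, ∞), satisfies y'' + (2/x)y' + y^m = 0 on (0, ∞) with y(0) = 1 and y > 0 on [0, R) for some R > 0, where m ≥ 1 is a natural number. Then y'(x) < 0 for all x in (0, R), i.e., y is strictly decreasing on (0, R). -/
/-!
The equation says `(x² y')' = -x² yᵐ`, which is negative while `y > 0`. So `x² y'` is strictly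
decreasing on `[0, R)`, and since it vanishes at `0` it is negative on `(0, R)`. The same argument
works for the radial Laplacian `y'' + (k/x) y'` in any dimension `k + 1 ≥ 2`, with weight `xᵏ`.
-/

open Set

theorem hasDerivAt_pow_mul_deriv {y : ℝ → ℝ} {t : ℝ} (k : ℕ) (ht : t ≠ 0)
    (hy' : DifferentiableAt ℝ (deriv y) t) :
    HasDerivAt (fun s => s ^ k * deriv y s)
      (t ^ k * (deriv (deriv y) t + k / t * deriv y t)) t := by
  refine ((hasDerivAt_pow k t).mul hy'.hasDerivAt).congr_deriv ?_
  rcases k with _ | k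
  · simp
  · rw [Nat.add_sub_cancel]
    push_cast
    field_simp
    ring

theorem deriv_neg_of_radialLaplacian_neg {y : ℝ → ℝ} {k : ℕ} (hk : k ≠ 0)
    (hy : ContDiffOn ℝ 2 y (Ici 0)) {x : ℝ} (hx : 0 < x)
    (hΔ : ∀ t ∈ Ioo 0 x, deriv (deriv y) t + k / t * deriv y t < 0) :
    deriv y x < 0 := by
  -- `y` is only controlled on `[0, ∞)`, so at `0` only the one-sided derivative is meaningful.
  set g : ℝ → ℝ := fun t => t ^ k * derivWithin y (Ici 0) t with hg
  have hdW : ∀ t, 0 < t → derivWithin y (Ici 0) t = deriv y t := fun t ht =>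
    derivWithin_of_mem_nhds (Ici_mem_nhds ht)
  have hg_eq : ∀ t, 0 < t → g =ᶠ[nhds t] fun s => s ^ k * deriv y s := fun t ht => by
    filter_upwards [Ioi_mem_nhds ht] with s hs
    simp only [hg, hdW s hs]
  have hg_cont : ContinuousOn g (Icc 0 x) :=
    (continuousOn_pow k).mul <|
      (hy.continuousOn_derivWithin (uniqueDiffOn_Ici 0) one_le_two).mono fun _ ht => ht.1
  have hy' : ContDiffOn ℝ 1 (deriv y) (Ioi 0) :=
    (hy.mono Ioi_subset_Ici_self).deriv_of_isOpen isOpen_Ioi (by norm_num)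
  have hg_deriv : ∀ t ∈ interior (Icc 0 x), deriv g t < 0 := by
    intro t ht
    rw [interior_Icc] at ht
    have hy't : DifferentiableAt ℝ (deriv y) t :=
      (hy'.differentiableOn one_ne_zero).differentiableAt (Ioi_mem_nhds ht.1)
    rw [((hasDerivAt_pow_mul_deriv k ht.1.ne' hy't).congr_of_eventuallyEq (hg_eq t ht.1)).deriv]
    exact mul_neg_of_pos_of_neg (pow_pos ht.1 k) (hΔ t ht)
  have hgx : g x < g 0 :=
    strictAntiOn_of_deriv_neg (convex_Icc 0 x) hg_cont hg_deriv
      (left_mem_Icc.2 hx.le) (right_mem_Icc.2 hx.le) hx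
  simp only [hg, hdW x hx, zero_pow hk, zero_mul] at hgx
  exact neg_of_mul_neg_right hgx (pow_pos hx k).le

theorem laneEmden_strict_decreasing_general (m : ℕ) (y : ℝ → ℝ) (R : ℝ)
    (hy : ContDiffOn ℝ 2 y (Set.Ici (0 : ℝ)))
    (hode : ∀ x : ℝ, 0 < x →
      deriv (deriv y) x + (2 / x) * deriv y x + (y x) ^ m = 0)
    (hpos : ∀ x : ℝ, 0 ≤ x → x < R → 0 < y x) :
    ∀ x : ℝ, 0 < x → x < R → deriv y x < 0 := by
  intro x hx hxR
  refine deriv_neg_of_radialLaplacian_neg two_ne_zero hy hx fun t ht => ?_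
  have hym : 0 < y t ^ m := pow_pos (hpos t ht.1.le (ht.2.trans hxR)) m
  have := hode t ht.1
  push_cast
  linarith

theorem laneEmden_strict_decreasing (m : ℕ) (hm : 1 ≤ m) (y : ℝ → ℝ) (R : ℝ) (hR : 0 < R)
    (hy : ContDiffOn ℝ 2 y (Set.Ici (0 : ℝ)))
    (hode : ∀ x : ℝ, 0 < x →
      deriv (deriv y) x + (2 / x) * deriv y x + (y x) ^ m = 0)
    (hy0 : y 0 = 1)
    (hpos : ∀ x : ℝ, 0 ≤ x → x < R → 0 < y x) :
    ∀ x : ℝ, 0 < x → x < R → deriv y x < 0 :=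
  laneEmden_strict_decreasing_general m y R hy hode hpos
end
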